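/- arXiv:2009.12600 — 7 statements merged into one kernel-verified Lean document; each statement's English description precedes it below -/
import Mathlib

section
/- Let M = ⟨S, A, T, s0⟩ be an nrMDP, λ : A × S → Z a labeling function, R = ⟨U, u0, Z, δ_u, δ_r, c⟩ a Mealy reward machine, and P = M ⊗_λ R their synchronized product. Then the map B is a bijection from the set of histories of M onto the set of histories of P. -/
open MeasureTheory Filter

attribute [local instance] Classical.propDecidable

/-- A non-rewarding Markov decision process over finite state set `S` and
finite action set `A`. -/
structure NRMDP (S A : Type) [Fintype S] [Fintype A] where
  T : S → A → S → ℝ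
  T_nonneg : ∀ s a s', 0 ≤ T s a s'
  T_le_one : ∀ s a s', T s a s' ≤ 1
  T_sum_one : ∀ s a, ∑ s', T s a s' = 1
  s0 : S

/-- A Mealy reward machine over the finite observation set `Z` with
distinguished observation `null`. -/
structure MRM (U Z : Type) [Fintype U] [Fintype Z] (null : Z) where
  u0 : U
  δu : U → Z → U
  δr : U → Z → ℝ
  c : ℝ
  δu_null : ∀ u, δu u null = u
  δr_null : ∀ u, δr u null = c

variable {S A U Z St Ac : Type}

/-- `ValidFrom T s steps` : the alternating sequence starting at `s` whose
successive (action, next-state) steps are `steps` has positive transition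
probability at every step. -/
def ValidFrom (T : St → Ac → St → ℝ) : St → List (Ac × St) → Prop
  | _, [] => True
  | s, step :: rest => 0 < T s step.1 step.2 ∧ ValidFrom T step.2 rest

/-- Transition function of the synchronized product `M ⊗_λ R`. -/
noncomputable def prodT (T : S → A → S → ℝ) (lab : A → S → Z) (δu : U → Z → U) :
    S × U → A → S × U → ℝ :=
  fun p a q => if q.2 = δu p.2 (lab a q.1) then T p.1 a q.1 else 0

/-- The map `B` (on the step list of a history), lifting a history of `M`
to a history of the synchronized product by tracking the MRM node. -/
def liftHist (lab : A → S → Z) (δu : U → Z → U) : U → List (A × S) → List (A × (S × U))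
  | _, [] => []
  | u, (a, s') :: rest =>
      (a, (s', δu u (lab a s'))) :: liftHist lab δu (δu u (lab a s')) rest

lemma liftHist_mapsTo (T : S → A → S → ℝ) (lab : A → S → Z) (δu : U → Z → U) :
    ∀ (h : List (A × S)) (s : S) (u : U), ValidFrom T s h →
      ValidFrom (prodT T lab δu) (s, u) (liftHist lab δu u h)
  | [], _, _, _ => trivial
  | (a, s') :: rest, s, u, hv => by
      obtain ⟨hpos, hrest⟩ := hv
      refine ⟨?_, liftHist_mapsTo T lab δu rest s' _ hrest⟩
      simpa [prodT] using hpos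

lemma liftHist_inj (lab : A → S → Z) (δu : U → Z → U) :
    ∀ (h₁ h₂ : List (A × S)) (u : U),
      liftHist lab δu u h₁ = liftHist lab δu u h₂ → h₁ = h₂
  | [], [], _, _ => rfl
  | [], (a, s') :: _, _, h => by simp [liftHist] at h
  | (a, s') :: _, [], _, h => by simp [liftHist] at h
  | (a₁, s₁) :: r₁, (a₂, s₂) :: r₂, u, h => by
      simp only [liftHist, List.cons.injEq, Prod.mk.injEq] at h
      obtain ⟨⟨ha, hs, -⟩, hr⟩ := h
      subst ha; subst hs
      exact congrArg _ (liftHist_inj lab δu r₁ r₂ _ hr)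

lemma liftHist_surj (T : S → A → S → ℝ) (lab : A → S → Z) (δu : U → Z → U) :
    ∀ (H : List (A × (S × U))) (s : S) (u : U),
      ValidFrom (prodT T lab δu) (s, u) H →
      ∃ h : List (A × S), ValidFrom T s h ∧ liftHist lab δu u h = H
  | [], _, _, _ => ⟨[], trivial, rfl⟩
  | (a, (s', u')) :: rest, s, u, hv => by
      obtain ⟨hpos, hrest⟩ := hv
      have hu : u' = δu u (lab a s') := by
        by_contra hne
        simp [prodT, hne] at hpos
      subst hu
      have hT : 0 < T s a s' := by simpa [prodT] using hpos
      obtain ⟨h, hvh, hlift⟩ := liftHist_surj T lab δu rest s' _ hrest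
      exact ⟨(a, s') :: h, ⟨hT, hvh⟩, by simp [liftHist, hlift]⟩

/-- `B` is a bijection from the set of histories of `M`
onto the set of histories of the synchronized product `P = M ⊗_λ R`. -/
theorem B_bijOn_histories [Fintype S] [Fintype A] [Fintype U] [Fintype Z]
    (M : NRMDP S A) (null : Z) (lab : A → S → Z) (R : MRM U Z null) :
    Set.BijOn (liftHist lab R.δu R.u0)
      {h : List (A × S) | ValidFrom M.T M.s0 h}
      {h : List (A × (S × U)) |
        ValidFrom (prodT M.T lab R.δu) (M.s0, R.u0) h} := by
  refine ⟨fun h hh => liftHist_mapsTo M.T lab R.δu h M.s0 R.u0 hh,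
    fun h₁ _ h₂ _ he => liftHist_inj lab R.δu h₁ h₂ R.u0 he,
    fun H hH => ?_⟩
  obtain ⟨h, hv, hl⟩ := liftHist_surj M.T lab R.δu H M.s0 R.u0 hH
  exact ⟨h, hv, hl⟩
end

section
/- Let M = ⟨S, A, T, s0⟩ be an nrMDP, λ : A × S → Z a labeling function, R = ⟨U, u0, Z, δ_u, δ_r, c⟩ a Mealy reward machine, and P = M ⊗_λ R their synchronized product. The map sending a strategy π of M (a function from the set of histories of M to A) to the strategy π⊗ of P defined by π⊗(B(σh)) = π(σh) for every history σh of M is well defined and is a bijection between the set of strategies of M and the set of strategies of P. -/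
open MeasureTheory Filter

attribute [local instance] Classical.propDecidable

variable {S A U Z St Ac : Type}

/-- The set of histories of an MDP with transition function `T` and initial
state `s0`, as a subtype of step lists. -/
def Hist (T : St → Ac → St → ℝ) (s0 : St) : Type := {h : List (Ac × St) // ValidFrom T s0 h}

/-!
`prodT` vanishes unless the node component follows the machine, so a product history is
determined by its `M`-component: forgetting the nodes inverts `B`. A strategy of `M` then
transfers to `P` by precomposition with `B⁻¹`, and this is forced by `π⊗ ∘ B = π`.
-/

theorem prodT_pos_iff (T : S → A → S → ℝ) (lab : A → S → Z) (δu : U → Z → U)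
    (s s' : S) (u u' : U) (a : A) :
    0 < prodT T lab δu (s, u) a (s', u') ↔ u' = δu u (lab a s') ∧ 0 < T s a s' := by
  simp only [prodT]
  split_ifs <;> simp_all

theorem map_liftHist (lab : A → S → Z) (δu : U → Z → U) (u : U) (l : List (A × S)) :
    (liftHist lab δu u l).map (Prod.map id Prod.fst) = l := by
  induction l generalizing u with
  | nil => rfl
  | cons step l ih => simp [liftHist, ih]

theorem liftHist_injective (lab : A → S → Z) (δu : U → Z → U) (u : U) :
    Function.Injective (liftHist lab δu u) :=
  Function.LeftInverse.injective (map_liftHist lab δu u)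

theorem exists_liftHist_eq_of_validFrom (T : S → A → S → ℝ) (lab : A → S → Z)
    (δu : U → Z → U) {l : List (A × (S × U))} {s : S} {u : U}
    (hl : ValidFrom (prodT T lab δu) (s, u) l) :
    ∃ h, ValidFrom T s h ∧ liftHist lab δu u h = l := by
  induction l generalizing s u with
  | nil => exact ⟨[], trivial, rfl⟩
  | cons step l ih =>
    obtain ⟨a, s', u'⟩ := step
    obtain ⟨hpos, hrest⟩ := hl
    obtain ⟨rfl, hT⟩ := (prodT_pos_iff T lab δu s s' u u' a).1 hpos
    obtain ⟨h, hh, rfl⟩ := ih hrest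
    exact ⟨(a, s') :: h, ⟨hT, hh⟩, rfl⟩

theorem bijective_of_val_eq_liftHist (T : S → A → S → ℝ) (lab : A → S → Z)
    (δu : U → Z → U) (s0 : S) (u0 : U) (B : Hist T s0 → Hist (prodT T lab δu) (s0, u0))
    (hB : ∀ h : Hist T s0, (B h).val = liftHist lab δu u0 h.val) :
    Function.Bijective B := by
  refine ⟨fun h₁ h₂ he => Subtype.ext ?_, fun h' => ?_⟩
  · apply liftHist_injective lab δu u0
    rw [← hB, ← hB, he]
  · obtain ⟨h, hh, hlift⟩ := exists_liftHist_eq_of_validFrom T lab δu h'.property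
    exact ⟨⟨h, hh⟩, Subtype.ext ((hB _).trans hlift)⟩

theorem Function.Bijective.exists_bijective_precomp_unique {α β γ : Type*} {B : α → β}
    (hB : Function.Bijective B) :
    ∃ Φ : (α → γ) → (β → γ), (∀ π a, Φ π (B a) = π a) ∧ Function.Bijective Φ ∧
      ∀ Φ' : (α → γ) → (β → γ), (∀ π a, Φ' π (B a) = π a) → Φ' = Φ := by
  let e := Equiv.ofBijective B hB
  refine ⟨e.arrowCongr (Equiv.refl γ), fun π a => by simp [e], Equiv.bijective _,
    fun Φ' hΦ' => funext fun π => funext fun b => ?_⟩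
  obtain ⟨a, rfl⟩ := hB.surjective b
  simp [hΦ', e]

/-- For any map `B` from histories of `M` to histories of
`P = M ⊗_λ R` acting as `liftHist` (i.e. the map `B` of the paper), the map
sending a strategy `π` of `M` to the strategy `π⊗` of `P` determined by
`π⊗(B(σh)) = π(σh)` is well defined (it exists and is unique) and is a
bijection between the strategies of `M` and the strategies of `P`. -/
theorem strategy_correspondence_bijective
    [Fintype S] [Fintype A] [Fintype U] [Fintype Z]
    (M : NRMDP S A) (null : Z) (lab : A → S → Z) (R : MRM U Z null)
    (B : Hist M.T M.s0 → Hist (prodT M.T lab R.δu) ((M.s0 : S), (R.u0 : U)))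
    (hB : ∀ h : Hist M.T M.s0, (B h).val = liftHist lab R.δu R.u0 h.val) :
    ∃ Φ : (Hist M.T M.s0 → A) → (Hist (prodT M.T lab R.δu) ((M.s0 : S), (R.u0 : U)) → A),
      (∀ π h, Φ π (B h) = π h) ∧
      Function.Bijective Φ ∧
      (∀ Φ' : (Hist M.T M.s0 → A) →
          (Hist (prodT M.T lab R.δu) ((M.s0 : S), (R.u0 : U)) → A),
        (∀ π h, Φ' π (B h) = π h) → Φ' = Φ) :=
  (bijective_of_val_eq_liftHist M.T lab R.δu M.s0 R.u0 B hB).exists_bijective_precomp_unique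
end

section
/- Let M = ⟨S, A, T, s0⟩ be an nrMDP, λ : A × S → Z a labeling function, R = ⟨U, u0, Z, δ_u, δ_r, c⟩ a Mealy reward machine, and P = M ⊗_λ R their synchronized product. For every history σh = s0 a0 s1 ⋯ s_k of M, the non-Markovian reward trace δ*_r(u0, σh) equals the sequence of Markovian immediate rewards collected along the product history B(σh): for every 0 ≤ i < k, the (i+1)-st entry of δ*_r(u0, σh) equals the reward δ_r(u_i, λ(a_i, s_{i+1})) collected in P at the transition from (s_i, u_i) via a_i to (s_{i+1}, u_{i+1}), where u_0 = u0 and u_1 ⋯ u_k = δ*_u(u0, σh). Consequently, the sum and the average of the rewards assigned by R to σh equal the sum and the average of the immediate rewards along B(σh). -/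
open MeasureTheory Filter

attribute [local instance] Classical.propDecidable

variable {S A U Z St Ac : Type}

/-- The reward trace `δ*_r(u, ·)` assigned by an MRM to (the step list of)
a history. -/
def rewardTrace (lab : A → S → Z) (δu : U → Z → U) (δr : U → Z → ℝ) :
    U → List (A × S) → List ℝ
  | _, [] => []
  | u, (a, s') :: rest =>
      δr u (lab a s') :: rewardTrace lab δu δr (δu u (lab a s')) rest

/-- The sequence of immediate rewards collected along (the step list of) a
history of an MDP whose immediate reward for the transition from `p` via
`a` to `q` is `Rew p a q`. -/
def rewardsAlong (Rew : St → Ac → St → ℝ) : St → List (Ac × St) → List ℝ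
  | _, [] => []
  | p, (a, q) :: rest => Rew p a q :: rewardsAlong Rew q rest

lemma rt_aux {S A U Z : Type} (lab : A → S → Z) (δu : U → Z → U) (δr : U → Z → ℝ) :
    ∀ (h : List (A × S)) (s : S) (u : U),
      rewardTrace lab δu δr u h =
        rewardsAlong (fun (p : S × U) (a : A) (q : S × U) => δr p.2 (lab a q.1)) (s, u)
          (liftHist lab δu u h) := by
  intro h
  induction h with
  | nil => intro s u; rfl
  | cons step rest ih =>
      intro s u
      obtain ⟨a, s'⟩ := step
      simp [rewardTrace, liftHist, rewardsAlong, ih s']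

/-- For every history `σh` of `M`, the non-Markovian reward
trace `δ*_r(u0, σh)` coincides (entry by entry, i.e. as a list) with the
sequence of Markovian immediate rewards collected along the product history
`B(σh)` in `P = M ⊗_λ R`; consequently their sums and averages agree. -/
theorem rewardTrace_eq_rewardsAlong_lift
    [Fintype S] [Fintype A] [Fintype U] [Fintype Z]
    (M : NRMDP S A) (null : Z) (lab : A → S → Z) (R : MRM U Z null) :
    ∀ h : List (A × S), ValidFrom M.T M.s0 h →
      rewardTrace lab R.δu R.δr R.u0 h =
        rewardsAlong (fun p a q => R.δr p.2 (lab a q.1)) ((M.s0 : S), (R.u0 : U))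
          (liftHist lab R.δu R.u0 h) ∧
      (rewardTrace lab R.δu R.δr R.u0 h).sum =
        (rewardsAlong (fun p a q => R.δr p.2 (lab a q.1)) ((M.s0 : S), (R.u0 : U))
          (liftHist lab R.δu R.u0 h)).sum ∧
      (rewardTrace lab R.δu R.δr R.u0 h).sum / (rewardTrace lab R.δu R.δr R.u0 h).length =
        (rewardsAlong (fun p a q => R.δr p.2 (lab a q.1)) ((M.s0 : S), (R.u0 : U))
          (liftHist lab R.δu R.u0 h)).sum /
        (rewardsAlong (fun p a q => R.δr p.2 (lab a q.1)) ((M.s0 : S), (R.u0 : U))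
          (liftHist lab R.δu R.u0 h)).length := by
  intro h _
  refine ⟨rt_aux lab R.δu R.δr h M.s0 R.u0, ?_, ?_⟩ <;>
    rw [rt_aux lab R.δu R.δr h M.s0 R.u0]
end

section
/- Let M = ⟨S, A, T, s0⟩ be an nrMDP, λ : A × S → Z a labeling function, R = ⟨U, u0, Z, δ_u, δ_r, c⟩ a Mealy reward machine, and P = M ⊗_λ R their synchronized product. For every strategy π for M and the corresponding strategy π⊗ for P (defined by π⊗(B(σh)) = π(σh) for every history σh of M), the expected mean payoffs coincide: E^{M,π}_{s0}(MP(R)) = E^{P,π⊗}_{(s0,u0)}(MP(R⊗)), where on the left the mean payoff is taken of the reward trace δ*_r(u0, ·) of the infinite history of M and on the right of the immediate rewards R⊗ collected along the infinite history of P. -/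
open MeasureTheory Filter

attribute [local instance] Classical.propDecidable

variable {S A U Z St Ac : Type}

/-- Every trajectory space `ℕ → X` over a (finite) state or step space `X`
carries the product of the discrete σ-algebras. -/
instance trajMeasurableSpace (X : Type) : MeasurableSpace (ℕ → X) :=
  @MeasurableSpace.pi ℕ (fun _ => X) (fun _ => ⊤)

/-- The cylinder of infinite trajectories extending the finite prefix `pre`. -/
def Cyl {X : Type} (pre : List X) : Set (ℕ → X) :=
  {ω | ∀ i : ℕ, i < pre.length → pre[i]? = some (ω i)}

/-- Auxiliary function: probability of a finite step sequence, given the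
current state, the history so far (fed to the strategy) and the remaining
steps. -/
noncomputable def prefixProbAux (T : St → Ac → St → ℝ) (π : List (Ac × St) → Ac) :
    St → List (Ac × St) → List (Ac × St) → ℝ
  | _, _, [] => 1
  | s, past, (a, s') :: rest =>
      (if a = π past then T s a s' else 0) *
        prefixProbAux T π s' (past ++ [(a, s')]) rest

/-- Probability, under strategy `π` from state `s0`, of the finite step
sequence `h`. -/
noncomputable def prefixProb (T : St → Ac → St → ℝ) (π : List (Ac × St) → Ac)
    (s0 : St) (h : List (Ac × St)) : ℝ :=
  prefixProbAux T π s0 [] h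

/-- `IsInduced T π s0 μ` : `μ` is the probability measure on infinite
histories induced (via the Ionescu–Tulcea theorem) by playing strategy `π`
from `s0` in the MDP with transition function `T`; it is characterized by
its values on cylinders. -/
def IsInduced (T : St → Ac → St → ℝ) (π : List (Ac × St) → Ac) (s0 : St)
    (μ : MeasureTheory.Measure (ℕ → Ac × St)) : Prop :=
  MeasureTheory.IsProbabilityMeasure μ ∧
    ∀ h : List (Ac × St), μ (Cyl h) = ENNReal.ofReal (prefixProb T π s0 h)

/-- The MRM node reached after `i` steps of the infinite history `ω`. -/
def nodeAt (lab : A → S → Z) (δu : U → Z → U) (u0 : U) (ω : ℕ → A × S) : ℕ → U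
  | 0 => u0
  | i + 1 => δu (nodeAt lab δu u0 ω i) (lab (ω i).1 (ω i).2)

/-- The reward trace (under the MRM) of the infinite history `ω` of `M`. -/
noncomputable def rewAt (lab : A → S → Z) (δu : U → Z → U) (δr : U → Z → ℝ)
    (u0 : U) (ω : ℕ → A × S) (i : ℕ) : ℝ :=
  δr (nodeAt lab δu u0 ω i) (lab (ω i).1 (ω i).2)

/-- The mean payoff `limsup_k (1/k) ∑_{i=1}^k r_i` of an infinite reward
sequence. -/
noncomputable def meanPayoff (r : ℕ → ℝ) : ℝ :=
  Filter.limsup (fun k : ℕ => (∑ i ∈ Finset.range k, r i) / k) Filter.atTop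

/-- The product-MDP state occupied before step `i` along an infinite history
of the synchronized product (only its MRM-node component is recorded). -/
def prodNodeAt (u0 : U) (ω : ℕ → A × (S × U)) : ℕ → U
  | 0 => u0
  | i + 1 => (ω i).2.2

/-- The immediate rewards `R⊗` collected along an infinite history of the
synchronized product. -/
noncomputable def prodRewAt (lab : A → S → Z) (δr : U → Z → ℝ) (u0 : U)
    (ω : ℕ → A × (S × U)) (i : ℕ) : ℝ :=
  δr (prodNodeAt u0 ω i) (lab (ω i).1 (ω i).2.1)

/-!
Lifting an infinite history of `M` to the product by recording the node of the reward machine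
after each step is a measurable map `liftTraj` that carries `μM` to `μP`. Both measures are
determined by their values on cylinders. A cylinder of the product that is not the lift of a
history of `M` has empty preimage and, since it contradicts the node update, probability zero;
on lifted cylinders the prefix probabilities agree because `πP` copies `π` on every possible
history. Along the lift the immediate rewards of the product are exactly the reward trace, so
the change of variables formula gives the equality of the expectations.
-/

section TopMeasurable

/- The state and action types carry no `MeasurableSpace` instance: as in `trajMeasurableSpace`,
measurability into them is with respect to the discrete σ-algebra `⊤`. -/

variable {Ω β γ ε : Type*} [MeasurableSpace Ω]

lemma measurable_top_comp₂ [Countable β] [Countable γ] {f : Ω → β} {g : Ω → γ}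
    (hf : Measurable[_, ⊤] f) (hg : Measurable[_, ⊤] g) (k : β → γ → ε) :
    Measurable[_, ⊤] fun ω => k (f ω) (g ω) := by
  have hpair : Measurable[_, ⊤] fun ω => (f ω, g ω) :=
    @measurable_to_countable' _ _ ⊤ _ _ _ fun x => by
      have : (fun ω => (f ω, g ω)) ⁻¹' {x} = f ⁻¹' {x.1} ∩ g ⁻¹' {x.2} := by
        ext; simp [Prod.ext_iff]
      exact this ▸ (hf trivial).inter (hg trivial)
  exact (@measurable_from_top _ _ ⊤ (Function.uncurry k)).comp hpair

lemma measurable_eval_top {X : Type} (i : ℕ) : Measurable[_, ⊤] fun ω : ℕ → X => ω i :=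
  @measurable_pi_apply ℕ (fun _ => X) (fun _ => ⊤) i

end TopMeasurable

section Cylinders

variable {X : Type}

lemma mem_Cyl_iff {pre : List X} {ω : ℕ → X} :
    ω ∈ Cyl pre ↔ (List.range pre.length).map ω = pre := by
  refine ⟨fun hω => List.ext_getElem? fun i => ?_, fun hω i hi => ?_⟩
  · by_cases hi : i < pre.length
    · rw [List.getElem?_map, List.getElem?_range hi, hω i hi]
      rfl
    · rw [List.getElem?_eq_none (by simpa using hi), List.getElem?_eq_none (by simpa using hi)]
  · rw [← hω, List.getElem?_map, List.getElem?_range (by simpa using hi)]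
    rfl

lemma measurableSet_Cyl (pre : List X) : MeasurableSet (Cyl pre) := by
  simp only [Cyl, Set.ofPred_forall]
  exact .iInter fun i => .iInter fun _ => @measurable_eval_top X i {x | pre[i]? = some x} trivial

lemma Cyl_subset_Cyl {pre₁ pre₂ : List X} {ω : ℕ → X} (hω : ω ∈ Cyl pre₁ ∩ Cyl pre₂)
    (hle : pre₁.length ≤ pre₂.length) : Cyl pre₂ ⊆ Cyl pre₁ := fun ω' hω' i hi => by
  rw [hω.1 i hi, ← hω.2 i (hi.trans_le hle), hω' i (hi.trans_le hle)]

lemma isPiSystem_Cyl : IsPiSystem {C : Set (ℕ → X) | ∃ pre, C = Cyl pre} := by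
  rintro _ ⟨pre₁, rfl⟩ _ ⟨pre₂, rfl⟩ ⟨ω, hω⟩
  rcases le_total pre₁.length pre₂.length with hle | hle
  · exact ⟨pre₂, Set.inter_eq_right.2 (Cyl_subset_Cyl hω hle)⟩
  · exact ⟨pre₁, Set.inter_eq_left.2 (Cyl_subset_Cyl hω.symm hle)⟩

lemma trajMeasurableSpace_eq_generateFrom_Cyl [Countable X] :
    trajMeasurableSpace X = .generateFrom {C : Set (ℕ → X) | ∃ pre, C = Cyl pre} := by
  refine le_antisymm (iSup_le fun i => MeasurableSpace.comap_le_iff_le_map.2 ?_)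
    (MeasurableSpace.generateFrom_le ?_)
  · refine @measurable_to_countable' _ _ ⊤ _ (MeasurableSpace.generateFrom _) _ fun x => ?_
    have : (fun ω : ℕ → X => ω i) ⁻¹' {x} =
        ⋃ (pre : List X) (_ : pre.length = i + 1 ∧ pre[i]? = some x), Cyl pre := by
      ext ω
      simp only [Set.mem_preimage, Set.mem_singleton_iff, Set.mem_iUnion, exists_prop]
      refine ⟨fun hx => ⟨(List.range (i + 1)).map ω, ⟨by simp, by simp [hx]⟩,
        mem_Cyl_iff.2 (by simp)⟩, ?_⟩
      rintro ⟨pre, ⟨hlen, hx⟩, hω⟩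
      exact Option.some.inj ((hω i (by omega)).symm.trans hx)
    rw [this]
    exact .iUnion fun pre => .iUnion fun _ => MeasurableSpace.measurableSet_generateFrom ⟨pre, rfl⟩
  · rintro _ ⟨pre, rfl⟩
    exact measurableSet_Cyl pre

end Cylinders

lemma IsInduced.unique [Countable Ac] [Countable St] {T : St → Ac → St → ℝ}
    {π : List (Ac × St) → Ac} {s0 : St} {μ ν : Measure (ℕ → Ac × St)}
    (hμ : IsInduced T π s0 μ) (hν : IsInduced T π s0 ν) : μ = ν := by
  have := hμ.1
  have := hν.1
  refine ext_of_generate_finite _ trajMeasurableSpace_eq_generateFrom_Cyl isPiSystem_Cyl ?_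
    (by simp)
  rintro _ ⟨pre, rfl⟩
  rw [hμ.2, hν.2]

section Lift

variable (lab : A → S → Z) (δu : U → Z → U)

def liftTraj (u0 : U) (ω : ℕ → A × S) : ℕ → A × (S × U) :=
  fun i => ((ω i).1, ((ω i).2, nodeAt lab δu u0 ω (i + 1)))

lemma nodeAt_succ_eq_nodeAt_tail (u : U) (ω : ℕ → A × S) :
    ∀ i, nodeAt lab δu u ω (i + 1) =
      nodeAt lab δu (δu u (lab (ω 0).1 (ω 0).2)) (fun j => ω (j + 1)) i
  | 0 => rfl
  | i + 1 => by rw [nodeAt, nodeAt_succ_eq_nodeAt_tail u ω i]; rfl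

lemma map_range_liftTraj :
    ∀ (n : ℕ) (u : U) (ω : ℕ → A × S),
      (List.range n).map (liftTraj lab δu u ω) = liftHist lab δu u ((List.range n).map ω)
  | 0, _, _ => rfl
  | n + 1, u, ω => by
    rw [List.range_succ_eq_map, List.map_cons, List.map_cons, List.map_map, List.map_map]
    have htail : liftTraj lab δu u ω ∘ Nat.succ =
        liftTraj lab δu (δu u (lab (ω 0).1 (ω 0).2)) (fun j => ω (j + 1)) := by
      funext i
      simp only [Function.comp, liftTraj, Nat.succ_eq_add_one, nodeAt_succ_eq_nodeAt_tail]
    rw [htail, map_range_liftTraj n]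
    rfl

lemma liftHist_leftInverse (u : U) :
    Function.LeftInverse (List.map fun p : A × (S × U) => (p.1, p.2.1)) (liftHist lab δu u) := by
  intro h
  induction h generalizing u with
  | nil => rfl
  | cons p h ih => simpa [liftHist] using ih _

lemma liftHist_length (u : U) (h : List (A × S)) : (liftHist lab δu u h).length = h.length := by
  simpa using congrArg List.length (liftHist_leftInverse lab δu u h)

lemma preimage_liftTraj_Cyl_liftHist (u0 : U) (h : List (A × S)) :
    liftTraj lab δu u0 ⁻¹' Cyl (liftHist lab δu u0 h) = Cyl h := by
  ext ω
  rw [Set.mem_preimage, mem_Cyl_iff, mem_Cyl_iff, liftHist_length, map_range_liftTraj]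
  exact (liftHist_leftInverse lab δu u0).injective.eq_iff

lemma preimage_liftTraj_Cyl_of_notMem_range (u0 : U) {hP : List (A × (S × U))}
    (hP_notMem : hP ∉ Set.range (liftHist lab δu u0)) :
    liftTraj lab δu u0 ⁻¹' Cyl hP = ∅ :=
  Set.eq_empty_of_forall_notMem fun ω hω => hP_notMem
    ⟨_, (map_range_liftTraj lab δu _ u0 ω).symm.trans (mem_Cyl_iff.1 hω)⟩

lemma measurable_nodeAt [Countable A] [Countable S] [Countable U] (u0 : U) :
    ∀ i, Measurable[_, ⊤] fun ω => nodeAt lab δu u0 ω i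
  | 0 => measurable_const
  | i + 1 => measurable_top_comp₂ (measurable_nodeAt u0 i) (measurable_eval_top i)
      fun u p => δu u (lab p.1 p.2)

lemma measurable_liftTraj [Countable A] [Countable S] [Countable U] (u0 : U) :
    Measurable (liftTraj lab δu u0) :=
  @measurable_pi_lambda _ ℕ (fun _ => A × (S × U)) _ (fun _ => ⊤) _ fun i =>
    measurable_top_comp₂ (measurable_eval_top i) (measurable_nodeAt lab δu u0 (i + 1))
      fun p u => (p.1, (p.2, u))

lemma prodRewAt_liftTraj (δr : U → Z → ℝ) (u0 : U) (ω : ℕ → A × S) :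
    prodRewAt lab δr u0 (liftTraj lab δu u0 ω) = rewAt lab δu δr u0 ω := by
  funext i
  cases i <;> rfl

end Lift

section PrefixProb

variable {T : S → A → S → ℝ} {lab : A → S → Z} {δu : U → Z → U}

lemma prefixProbAux_prodT_eq_zero_of_notMem_range (πP : List (A × (S × U)) → A) :
    ∀ (hP : List (A × (S × U))) (s : S) (u : U) (past : List (A × (S × U))),
      hP ∉ Set.range (liftHist lab δu u) →
      prefixProbAux (prodT T lab δu) πP (s, u) past hP = 0
  | [], _, u, _, hP_notMem => (hP_notMem ⟨[], rfl⟩).elim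
  | (a, (s', u')) :: rest, s, u, past, hP_notMem => by
    rw [prefixProbAux, prodT]
    by_cases hu' : u' = δu u (lab a s')
    · subst hu'
      have hrest : rest ∉ Set.range (liftHist lab δu (δu u (lab a s'))) :=
        fun ⟨h, hh⟩ => hP_notMem ⟨(a, s') :: h, by rw [liftHist, hh]⟩
      rw [prefixProbAux_prodT_eq_zero_of_notMem_range πP rest s' _ _ hrest, mul_zero]
    · simp [hu']

lemma prefixProbAux_prodT_liftHist (hT : ∀ s a s', 0 ≤ T s a s')
    (π : List (A × S) → A) (πP : List (A × (S × U)) → A) :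
    ∀ (h : List (A × S)) (s : S) (u : U) (past : List (A × S)) (pastP : List (A × (S × U))),
      (∀ h', ValidFrom T s h' → πP (pastP ++ liftHist lab δu u h') = π (past ++ h')) →
      prefixProbAux (prodT T lab δu) πP (s, u) pastP (liftHist lab δu u h) =
        prefixProbAux T π s past h
  | [], _, _, _, _, _ => rfl
  | (a, s') :: rest, s, u, past, pastP, hcorr => by
    have hnow : πP pastP = π past := by simpa [liftHist] using hcorr [] trivial
    rw [liftHist, prefixProbAux, prefixProbAux, prodT, if_pos rfl, hnow]
    rcases (hT s a s').lt_or_eq with hpos | hzero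
    · rw [prefixProbAux_prodT_liftHist hT π πP rest s' _ (past ++ [(a, s')]) _ fun h' hvalid => by
        simpa [liftHist] using hcorr ((a, s') :: h') ⟨hpos, hvalid⟩]
    · simp [← hzero]

lemma prefixProb_prodT_liftHist (hT : ∀ s a s', 0 ≤ T s a s') {s0 : S} {u0 : U}
    {π : List (A × S) → A} {πP : List (A × (S × U)) → A}
    (hcorr : ∀ h, ValidFrom T s0 h → πP (liftHist lab δu u0 h) = π h) (h : List (A × S)) :
    prefixProb (prodT T lab δu) πP (s0, u0) (liftHist lab δu u0 h) = prefixProb T π s0 h :=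
  prefixProbAux_prodT_liftHist hT π πP h s0 u0 [] [] (by simpa using hcorr)

lemma IsInduced.map_liftTraj [Countable A] [Countable S] [Countable U]
    (hT : ∀ s a s', 0 ≤ T s a s') {s0 : S} {u0 : U}
    {π : List (A × S) → A} {πP : List (A × (S × U)) → A}
    (hcorr : ∀ h, ValidFrom T s0 h → πP (liftHist lab δu u0 h) = π h)
    {μ : Measure (ℕ → A × S)} (hμ : IsInduced T π s0 μ) :
    IsInduced (prodT T lab δu) πP (s0, u0) (μ.map (liftTraj lab δu u0)) := by
  have := hμ.1
  refine ⟨Measure.isProbabilityMeasure_map (measurable_liftTraj lab δu u0).aemeasurable,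
    fun hP => ?_⟩
  rw [Measure.map_apply (measurable_liftTraj lab δu u0) (measurableSet_Cyl hP)]
  by_cases hP_mem : hP ∈ Set.range (liftHist lab δu u0)
  · obtain ⟨h, rfl⟩ := hP_mem
    rw [preimage_liftTraj_Cyl_liftHist, hμ.2, prefixProb_prodT_liftHist hT hcorr]
  · rw [preimage_liftTraj_Cyl_of_notMem_range lab δu u0 hP_mem, prefixProb,
      prefixProbAux_prodT_eq_zero_of_notMem_range πP hP s0 u0 [] hP_mem,
      measure_empty, ENNReal.ofReal_zero]

end PrefixProb

lemma measurable_meanPayoff {Ω : Type*} [MeasurableSpace Ω] {r : Ω → ℕ → ℝ}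
    (hr : ∀ i, Measurable fun ω => r ω i) : Measurable fun ω => meanPayoff (r ω) :=
  .limsup fun _ => (Finset.measurable_sum _ fun i _ => hr i).div_const _

lemma measurable_prodRewAt [Countable A] [Countable S] [Countable U] (lab : A → S → Z)
    (δr : U → Z → ℝ) (u0 : U) (i : ℕ) :
    Measurable fun ω : ℕ → A × (S × U) => prodRewAt lab δr u0 ω i := by
  have hnode : Measurable[_, ⊤] fun ω : ℕ → A × (S × U) => prodNodeAt u0 ω i := by
    cases i with
    | zero => exact measurable_const
    | succ j =>
      exact (@measurable_from_top _ _ ⊤ fun p : A × (S × U) => p.2.2).comp (measurable_eval_top j)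
  exact (measurable_top_comp₂ hnode (measurable_eval_top i) fun u p => δr u (lab p.1 p.2.1)).mono
    le_rfl le_top

/-- For every strategy `π` for `M` and the corresponding
strategy `π⊗` for `P = M ⊗_λ R` (acting on `B`-images of histories of `M`
as prescribed by `π⊗(B(σh)) = π(σh)`), the expected mean payoff of the
non-Markovian reward trace of `R` in `M` equals the expected mean payoff of
the immediate rewards `R⊗` in `P`. -/
theorem expected_meanPayoff_eq_product
    [Fintype S] [Fintype A] [Fintype U] [Fintype Z]
    (M : NRMDP S A) (null : Z) (lab : A → S → Z) (R : MRM U Z null)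
    (π : List (A × S) → A) (πP : List (A × (S × U)) → A)
    (hcorr : ∀ h : List (A × S), ValidFrom M.T M.s0 h →
      πP (liftHist lab R.δu R.u0 h) = π h)
    (μM : MeasureTheory.Measure (ℕ → A × S))
    (μP : MeasureTheory.Measure (ℕ → A × (S × U)))
    (hμM : IsInduced M.T π M.s0 μM)
    (hμP : IsInduced (prodT M.T lab R.δu) πP ((M.s0 : S), (R.u0 : U)) μP) :
    ∫ ω, meanPayoff (rewAt lab R.δu R.δr R.u0 ω) ∂μM =
      ∫ ω, meanPayoff (prodRewAt lab R.δr R.u0 ω) ∂μP := by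
  rw [← (hμM.map_liftTraj M.T_nonneg hcorr).unique hμP,
    integral_map (measurable_liftTraj lab R.δu R.u0).aemeasurable
      (measurable_meanPayoff (measurable_prodRewAt lab R.δr R.u0)).aestronglyMeasurable]
  simp_rw [prodRewAt_liftTraj]
end

section
/- Let M = ⟨S, A, T, s0⟩ be an nrMDP, λ a labeling function, and R, H two Mealy reward machines over the same observations Z and labeling λ. Let σh = s0 a0 s1 ⋯ s_k be a history of M, and let u_i^R and u_i^H be the node sequences of R and H along σh (u_0^R = u0^R, u_{i+1}^R = δ_u^R(u_i^R, λ(a_i, s_{i+1})), and analogously for H). Then the sequence ⟨s_0, u_0^R, u_0^H⟩ a_0 ⟨s_1, u_1^R, u_1^H⟩ a_1 ⋯ ⟨s_k, u_k^R, u_k^H⟩ is a positive-transition-probability path of the monitored homing product M ⊗↻_λ R,H avoiding CE if and only if δ*_r^R(u0^R, σh) = δ*_r^H(u0^H, σh); moreover, every positive-transition-probability path of the monitored homing product from the initial state ⟨s0, u0^R, u0^H⟩ that uses only actions in A and avoids CE is of this form for some history σh of M. In particular, along every path of the monitored homing product avoiding CE, R and H produce identical reward traces. -/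
open MeasureTheory Filter

attribute [local instance] Classical.propDecidable

variable {S A U Z St Ac : Type}

variable {UR UH : Type}

/-- Transition function of the monitored homing product `M ⊗↻_λ R,H`.
States are `Option (S × UR × UH)` with `none` playing the role of the
counter-example state `CE`; actions are `A ⊕ Unit` with `Sum.inr ()`
playing the role of the reset action `↻`. -/
noncomputable def monT [Fintype S] [Fintype UR] [Fintype UH] [Fintype Z] {null : Z}
    (T : S → A → S → ℝ) (lab : A → S → Z)
    (R : MRM UR Z null) (H : MRM UH Z null) (s0 : S) :
    Option (S × UR × UH) → A ⊕ Unit → Option (S × UR × UH) → ℝ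
  | none, _, none => 1
  | none, _, some _ => 0
  | some x, Sum.inl a, some y =>
      if R.δr x.2.1 (lab a y.1) = H.δr x.2.2 (lab a y.1) ∧
         y.2.1 = R.δu x.2.1 (lab a y.1) ∧ y.2.2 = H.δu x.2.2 (lab a y.1)
      then T x.1 a y.1 else 0
  | some x, Sum.inl a, none =>
      ∑ s' : S, if R.δr x.2.1 (lab a s') ≠ H.δr x.2.2 (lab a s') then T x.1 a s' else 0
  | some _, Sum.inr _, some y => if y = (s0, R.u0, H.u0) then 1 else 0
  | some _, Sum.inr _, none => 0

/-- Lifting of (the step list of) a history of `M` to a step list of the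
monitored homing product, tracking the nodes of both machines. -/
def monLift [Fintype UR] [Fintype UH] [Fintype Z] {null : Z}
    (lab : A → S → Z) (R : MRM UR Z null) (H : MRM UH Z null) :
    UR × UH → List (A × S) → List ((A ⊕ Unit) × Option (S × UR × UH))
  | _, [] => []
  | w, (a, s') :: rest =>
      (Sum.inl a, some (s', R.δu w.1 (lab a s'), H.δu w.2 (lab a s'))) ::
        monLift lab R H (R.δu w.1 (lab a s'), H.δu w.2 (lab a s')) rest

/-! A step of the monitored homing product from `⟨s, u_R, u_H⟩` under `a ∈ A` to a state other
than `CE` has positive probability exactly when `T(s, a, s') > 0`, both machines emit the same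
reward on `λ(a, s')`, and the node components are the machines' successor nodes. Hence a path
avoiding `CE` and the reset action is determined by its projection to `M`, and induction along
that projection gives both claims. -/

section MonitoredProduct

variable [Fintype S] [Fintype UR] [Fintype UH] [Fintype Z] {null : Z}
  {T : S → A → S → ℝ} {lab : A → S → Z} {R : MRM UR Z null} {H : MRM UH Z null} {s0 : S}

theorem monT_some_inl_some_pos_iff {s s' : S} {uR uR' : UR} {uH uH' : UH} {a : A} :
    0 < monT T lab R H s0 (some (s, uR, uH)) (Sum.inl a) (some (s', uR', uH')) ↔
      0 < T s a s' ∧ R.δr uR (lab a s') = H.δr uH (lab a s') ∧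
        uR' = R.δu uR (lab a s') ∧ uH' = H.δu uH (lab a s') := by
  simp only [monT]
  split_ifs with hstep
  · tauto
  · simp only [lt_irrefl, false_iff]
    tauto

theorem validFrom_monT_monLift_iff (h : List (A × S)) (s : S) (uR : UR) (uH : UH) :
    ValidFrom (monT T lab R H s0) (some (s, uR, uH)) (monLift lab R H (uR, uH) h) ↔
      ValidFrom T s h ∧ rewardTrace lab R.δu R.δr uR h = rewardTrace lab H.δu H.δr uH h := by
  induction h generalizing s uR uH with
  | nil => simp [monLift, ValidFrom, rewardTrace]
  | cons step rest ih =>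
    obtain ⟨a, s'⟩ := step
    simp only [monLift, ValidFrom, rewardTrace, List.cons.injEq, monT_some_inl_some_pos_iff,
      and_true, ih]
    tauto

theorem exists_monLift_of_validFrom_monT {steps : List ((A ⊕ Unit) × Option (S × UR × UH))}
    {s : S} {uR : UR} {uH : UH} (hv : ValidFrom (monT T lab R H s0) (some (s, uR, uH)) steps)
    (hA : ∀ st ∈ steps, (∃ a : A, st.1 = Sum.inl a) ∧ st.2 ≠ none) :
    ∃ h : List (A × S), steps = monLift lab R H (uR, uH) h := by
  induction steps generalizing s uR uH with
  | nil => exact ⟨[], rfl⟩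
  | cons st rest ih =>
    obtain ⟨⟨a, ha⟩, hne⟩ := hA st List.mem_cons_self
    obtain ⟨α, _ | ⟨s', uR', uH'⟩⟩ := st
    · exact absurd rfl hne
    obtain rfl := ha
    obtain ⟨hpos, hrest⟩ := hv
    obtain ⟨-, -, rfl, rfl⟩ := monT_some_inl_some_pos_iff.1 hpos
    obtain ⟨h, rfl⟩ := ih hrest fun st hst => hA st (List.mem_cons_of_mem _ hst)
    exact ⟨(a, s') :: h, rfl⟩

end MonitoredProduct

/-- For a history `σh` of `M`, the lifted triple sequence
is a positive-transition-probability path of the monitored homing product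
avoiding `CE` iff `R` and `H` assign equal reward traces to `σh`; moreover
every positive path from the initial state using only actions of `A` and
avoiding `CE` arises this way, and in particular `R` and `H` produce
identical reward traces along it. -/
theorem monitored_paths_characterization
    [Fintype S] [Fintype A] [Fintype UR] [Fintype UH] [Fintype Z]
    (M : NRMDP S A) (null : Z) (lab : A → S → Z)
    (R : MRM UR Z null) (H : MRM UH Z null) :
    (∀ h : List (A × S), ValidFrom M.T M.s0 h →
      (ValidFrom (monT M.T lab R H M.s0) (some ((M.s0 : S), (R.u0 : UR), (H.u0 : UH)))
          (monLift lab R H (R.u0, H.u0) h) ↔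
        rewardTrace lab R.δu R.δr R.u0 h = rewardTrace lab H.δu H.δr H.u0 h)) ∧
    (∀ steps : List ((A ⊕ Unit) × Option (S × UR × UH)),
      ValidFrom (monT M.T lab R H M.s0) (some ((M.s0 : S), (R.u0 : UR), (H.u0 : UH))) steps →
      (∀ st ∈ steps, (∃ a : A, st.1 = Sum.inl a) ∧ st.2 ≠ none) →
      ∃ h : List (A × S), ValidFrom M.T M.s0 h ∧
        steps = monLift lab R H (R.u0, H.u0) h ∧
        rewardTrace lab R.δu R.δr R.u0 h = rewardTrace lab H.δu H.δr H.u0 h) := by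
  refine ⟨fun h hv => ?_, fun steps hv hA => ?_⟩
  · exact (validFrom_monT_monLift_iff h M.s0 R.u0 H.u0).trans (and_iff_right hv)
  · obtain ⟨h, rfl⟩ := exists_monLift_of_validFrom_monT hv hA
    obtain ⟨hvh, hr⟩ := (validFrom_monT_monLift_iff h M.s0 R.u0 H.u0).1 hv
    exact ⟨h, hvh, rfl, hr⟩
end

section
/- Let M = ⟨S, A, T, s0⟩ be an nrMDP, λ a labeling function, and R, H two Mealy reward machines over the same observations Z and labeling λ. In the directed graph of the monitored homing product M ⊗↻_λ R,H (with an edge from p to q if and only if T(p, α, q) > 0 for some action α ∈ A ∪ {↻}), the state CE is reachable from the initial state ⟨s0, u0^R, u0^H⟩ if and only if there exists a history σh of M with δ*_r^R(u0^R, σh) ≠ δ*_r^H(u0^H, σh). -/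
open MeasureTheory Filter

attribute [local instance] Classical.propDecidable

variable {S A U Z St Ac : Type}

variable {UR UH : Type}

/-- One-step edge relation of the directed graph of the monitored homing
product. -/
def MonStep [Fintype S] [Fintype UR] [Fintype UH] [Fintype Z] {null : Z}
    (T : S → A → S → ℝ) (lab : A → S → Z)
    (R : MRM UR Z null) (H : MRM UH Z null) (s0 : S)
    (p q : Option (S × UR × UH)) : Prop :=
  ∃ α : A ⊕ Unit, 0 < monT T lab R H s0 p α q

/-- End state of an alternating sequence. -/
def endSt : St → List (Ac × St) → St
  | s, [] => s
  | _, st :: rest => endSt st.2 rest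

/-- Run of the MRM node update along a history. -/
def runU (lab : A → S → Z) (δu : U → Z → U) : U → List (A × S) → U
  | u, [] => u
  | u, st :: rest => runU lab δu (δu u (lab st.1 st.2)) rest

lemma endSt_append (s : St) (h : List (Ac × St)) (st : Ac × St) :
    endSt s (h ++ [st]) = st.2 := by
  induction h generalizing s with
  | nil => rfl
  | cons hd tl ih => simpa [endSt] using ih hd.2

lemma validFrom_append (T : St → Ac → St → ℝ) (s : St) (h : List (Ac × St)) (st : Ac × St)
    (hv : ValidFrom T s h) (hT : 0 < T (endSt s h) st.1 st.2) :
    ValidFrom T s (h ++ [st]) := by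
  induction h generalizing s with
  | nil => exact ⟨hT, trivial⟩
  | cons hd tl ih => exact ⟨hv.1, ih hd.2 hv.2 hT⟩

lemma runU_append (lab : A → S → Z) (δu : U → Z → U) (u : U) (h : List (A × S))
    (st : A × S) :
    runU lab δu u (h ++ [st]) = δu (runU lab δu u h) (lab st.1 st.2) := by
  induction h generalizing u with
  | nil => rfl
  | cons hd tl ih => simpa [runU] using ih (δu u (lab hd.1 hd.2))

lemma rewardTrace_append (lab : A → S → Z) (δu : U → Z → U) (δr : U → Z → ℝ)
    (u : U) (h : List (A × S)) (st : A × S) :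
    rewardTrace lab δu δr u (h ++ [st]) =
      rewardTrace lab δu δr u h ++ [δr (runU lab δu u h) (lab st.1 st.2)] := by
  induction h generalizing u with
  | nil => rfl
  | cons hd tl ih => simpa [rewardTrace, runU] using ih (δu u (lab hd.1 hd.2))

lemma reach_none_of_diff
    [Fintype S] [Fintype A] [Fintype UR] [Fintype UH] [Fintype Z]
    (M : NRMDP S A) (null : Z) (lab : A → S → Z)
    (R : MRM UR Z null) (H : MRM UH Z null) :
    ∀ (h : List (A × S)) (s : S) (uR : UR) (uH : UH),
      ValidFrom M.T s h →
      rewardTrace lab R.δu R.δr uR h ≠ rewardTrace lab H.δu H.δr uH h →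
      Relation.ReflTransGen (MonStep M.T lab R H M.s0) (some (s, uR, uH)) none := by
  intro h
  induction h with
  | nil => intro s uR uH _ hne; simp [rewardTrace] at hne
  | cons st rest ih =>
    obtain ⟨a, s'⟩ := st
    intro s uR uH hv hne
    obtain ⟨hT, hv'⟩ := hv
    by_cases heq : R.δr uR (lab a s') = H.δr uH (lab a s')
    · have hne' : rewardTrace lab R.δu R.δr (R.δu uR (lab a s')) rest ≠
          rewardTrace lab H.δu H.δr (H.δu uH (lab a s')) rest := by
        intro hEq; apply hne; simp [rewardTrace, heq, hEq]
      have step : MonStep M.T lab R H M.s0 (some (s, uR, uH))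
          (some (s', R.δu uR (lab a s'), H.δu uH (lab a s'))) := by
        refine ⟨Sum.inl a, ?_⟩
        simpa [monT, heq] using hT
      exact Relation.ReflTransGen.head step (ih _ _ _ hv' hne')
    · refine Relation.ReflTransGen.single ⟨Sum.inl a, ?_⟩
      have hpos : 0 < ∑ s'' : S,
          if R.δr uR (lab a s'') ≠ H.δr uH (lab a s'') then M.T s a s'' else 0 := by
        apply Finset.sum_pos' (fun i _ => by split_ifs <;> simp [M.T_nonneg])
        · exact ⟨s', Finset.mem_univ s', by simp [heq, hT]⟩
      simpa [monT] using hpos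

/-- In the monitored homing product `M ⊗↻_λ R,H`, the
counter-example state `CE` is reachable from the initial state iff there is
a history of `M` on which `R` and `H` produce different reward traces. -/
theorem CE_reachable_iff_distinguishing_history
    [Fintype S] [Fintype A] [Fintype UR] [Fintype UH] [Fintype Z]
    (M : NRMDP S A) (null : Z) (lab : A → S → Z)
    (R : MRM UR Z null) (H : MRM UH Z null) :
    Relation.ReflTransGen (MonStep M.T lab R H M.s0)
        (some ((M.s0 : S), (R.u0 : UR), (H.u0 : UH))) none ↔
      ∃ h : List (A × S), ValidFrom M.T M.s0 h ∧
        rewardTrace lab R.δu R.δr R.u0 h ≠ rewardTrace lab H.δu H.δr H.u0 h := by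
  constructor
  · intro hreach
    have key : ∀ q, Relation.ReflTransGen (MonStep M.T lab R H M.s0)
        (some (M.s0, R.u0, H.u0)) q →
        (∃ h : List (A × S), ValidFrom M.T M.s0 h ∧
          rewardTrace lab R.δu R.δr R.u0 h ≠ rewardTrace lab H.δu H.δr H.u0 h) ∨
        (∃ x, q = some x ∧ ∃ h : List (A × S), ValidFrom M.T M.s0 h ∧
          endSt M.s0 h = x.1 ∧ runU lab R.δu R.u0 h = x.2.1 ∧
          runU lab H.δu H.u0 h = x.2.2 ∧
          rewardTrace lab R.δu R.δr R.u0 h = rewardTrace lab H.δu H.δr H.u0 h) := by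
      intro q hq
      induction hq with
      | refl =>
        exact Or.inr ⟨(M.s0, R.u0, H.u0), rfl, [], trivial, rfl, rfl, rfl, rfl⟩
      | tail hstep hedge ih =>
        rename_i p q
        rcases ih with hL | ⟨x, rfl, h, hv, hend, hrR, hrH, htr⟩
        · exact Or.inl hL
        obtain ⟨α, hpos⟩ := hedge
        match α, q with
        | Sum.inr _, none => simp [monT] at hpos
        | Sum.inr _, some y =>
          have hy : y = (M.s0, R.u0, H.u0) := by
            by_contra hne; simp [monT, hne] at hpos
          subst hy
          exact Or.inr ⟨_, rfl, [], trivial, rfl, rfl, rfl, rfl⟩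
        | Sum.inl a, some y =>
          have hc : (R.δr x.2.1 (lab a y.1) = H.δr x.2.2 (lab a y.1) ∧
              y.2.1 = R.δu x.2.1 (lab a y.1) ∧ y.2.2 = H.δu x.2.2 (lab a y.1)) ∧
              0 < M.T x.1 a y.1 := by
            by_cases hcond : R.δr x.2.1 (lab a y.1) = H.δr x.2.2 (lab a y.1) ∧
                y.2.1 = R.δu x.2.1 (lab a y.1) ∧ y.2.2 = H.δu x.2.2 (lab a y.1)
            · exact ⟨hcond, by simpa [monT, hcond] using hpos⟩
            · simp [monT, hcond] at hpos
          obtain ⟨⟨hre, hyR, hyH⟩, hT⟩ := hc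
          refine Or.inr ⟨y, rfl, h ++ [(a, y.1)], ?_, ?_, ?_, ?_, ?_⟩
          · exact validFrom_append _ _ _ _ hv (by rw [hend]; exact hT)
          · simp [endSt_append]
          · rw [runU_append, hrR, hyR]
          · rw [runU_append, hrH, hyH]
          · rw [rewardTrace_append, rewardTrace_append, htr, hrR, hrH, hre]
        | Sum.inl a, none =>
          have hpos' : 0 < ∑ s' : S,
              if R.δr x.2.1 (lab a s') ≠ H.δr x.2.2 (lab a s') then M.T x.1 a s'
              else 0 := by simpa [monT] using hpos
          obtain ⟨s', -, hs'⟩ : ∃ s' ∈ (Finset.univ : Finset S),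
              0 < if R.δr x.2.1 (lab a s') ≠ H.δr x.2.2 (lab a s') then M.T x.1 a s'
              else 0 := by
            by_contra hc
            push_neg at hc
            exact absurd (Finset.sum_nonpos fun i hi => hc i hi) (not_le.mpr hpos')
          have hne : R.δr x.2.1 (lab a s') ≠ H.δr x.2.2 (lab a s') := by
            by_contra hc; simp [hc] at hs'
          have hT : 0 < M.T x.1 a s' := by simpa [hne] using hs'
          refine Or.inl ⟨h ++ [(a, s')], validFrom_append _ _ _ _ hv
            (by rw [hend]; exact hT), ?_⟩
          rw [rewardTrace_append, rewardTrace_append, htr, hrR, hrH]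
          intro hEq
          have := List.append_cancel_left hEq
          simp at this
          exact hne this
    rcases key none hreach with hL | ⟨x, hx, _⟩
    · exact hL
    · cases hx
  · rintro ⟨h, hv, hne⟩
    exact reach_none_of_diff M null lab R H h M.s0 R.u0 H.u0 hv hne
end

section
/- Let M = ⟨S, A, T, s0⟩ be an nrMDP, λ a labeling function, and R, H two Mealy reward machines over the same observations Z and labeling λ. Let N = |A| + 1 and consider the Markov chain on the state set of the monitored homing product M ⊗↻_λ R,H with transition matrix P(x, y) = (1/N) Σ_{α ∈ A∪{↻}} T(x, α, y) (the chain induced by the uniform strategy π_u that plays every action in A ∪ {↻} with probability 1/N). Then, under the trajectory measure of this Markov chain started at ⟨s0, u0^R, u0^H⟩, the probability of eventually visiting CE equals 1 if there exists a history σh of M with δ*_r^R(u0^R, σh) ≠ δ*_r^H(u0^H, σh), and equals 0 otherwise. -/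
open MeasureTheory Filter

attribute [local instance] Classical.propDecidable

variable {S A U Z St Ac : Type}

variable {UR UH : Type}

/-- Probability of traversing the finite state sequence `l` starting from
`x` in the Markov chain with transition matrix `P`. -/
noncomputable def chainFrom {X : Type} (P : X → X → ℝ) : X → List X → ℝ
  | _, [] => 1
  | x, y :: rest => P x y * chainFrom P y rest

/-- Probability of the finite trajectory prefix `pre` (including time 0) in
the Markov chain with transition matrix `P` started at `start`. -/
noncomputable def chainPrefixProb {X : Type} (P : X → X → ℝ) (start : X) :
    List X → ℝ
  | [] => 1
  | y :: rest => if y = start then chainFrom P y rest else 0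

/-- `IsChainMeasure P start μ` : `μ` is the trajectory probability measure
(given by the Ionescu–Tulcea theorem) of the Markov chain with transition
matrix `P` started at `start`, characterized by its values on cylinders. -/
def IsChainMeasure {X : Type} (P : X → X → ℝ) (start : X)
    (μ : MeasureTheory.Measure (ℕ → X)) : Prop :=
  MeasureTheory.IsProbabilityMeasure μ ∧
    ∀ pre : List X, μ (Cyl pre) = ENNReal.ofReal (chainPrefixProb P start pre)

/-!
If some history distinguishes `R` and `H`, then `CE` is reached from the initial state along a
path of some positive probability `c`. The reset action leads from every live state back to the
initial state with probability at least `1/N`, so from every live state `CE` is reached within a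
fixed number `k` of steps with probability at least `c/N`; hence the chain avoids `CE` for `m k`
steps with probability at most `(1 - c/N)^m → 0`.

If no history distinguishes them, the live states from which `R` and `H` agree on every history
contain the initial state and are closed under transitions of positive probability, so `CE` is
unreachable and every cylinder through `CE` is null.
-/

open Relation Matrix

section Chain

variable {X : Type} {P : X → X → ℝ}

lemma chainFrom_nonneg (hP : ∀ x y, 0 ≤ P x y) : ∀ (x : X) (l : List X), 0 ≤ chainFrom P x l
  | _, [] => zero_le_one
  | x, y :: l => mul_nonneg (hP x y) (chainFrom_nonneg hP y l)

lemma chainFrom_le_one (hP : ∀ x y, 0 ≤ P x y) (hP1 : ∀ x y, P x y ≤ 1) :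
    ∀ (x : X) (l : List X), chainFrom P x l ≤ 1
  | _, [] => le_rfl
  | x, y :: l => mul_le_one₀ (hP1 x y) (chainFrom_nonneg hP y l) (chainFrom_le_one hP hP1 y l)

lemma chainPrefixProb_nonneg (hP : ∀ x y, 0 ≤ P x y) (start : X) :
    ∀ l : List X, 0 ≤ chainPrefixProb P start l
  | [] => zero_le_one
  | y :: l => by
      rw [chainPrefixProb]
      split_ifs
      exacts [chainFrom_nonneg hP y l, le_rfl]

lemma reflTransGen_of_chainFrom_pos (hP : ∀ x y, 0 ≤ P x y) {y : X} :
    ∀ {x : X} {l : List X}, 0 < chainFrom P x l → y ∈ l →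
      ReflTransGen (fun a b => 0 < P a b) x y
  | _, [], _, hy => absurd hy List.not_mem_nil
  | x, z :: l, hpos, hy => by
      have hxz : 0 < P x z := pos_of_mul_pos_left hpos (chainFrom_nonneg hP z l)
      have hzl : 0 < chainFrom P z l := pos_of_mul_pos_right hpos (hP x z)
      rcases List.mem_cons.1 hy with rfl | hy
      · exact ReflTransGen.single hxz
      · exact ReflTransGen.head hxz (reflTransGen_of_chainFrom_pos hP hzl hy)

lemma exists_chainFrom_pos_of_transGen {x y : X} (h : TransGen (fun a b => 0 < P a b) x y) :
    ∃ w : List X, y ∈ w ∧ 0 < chainFrom P x w := by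
  induction h using TransGen.head_induction_on with
  | single hxy => exact ⟨[_], List.mem_singleton_self _, by simpa [chainFrom] using hxy⟩
  | head hxz _ ih =>
      obtain ⟨w, hyw, hw⟩ := ih
      exact ⟨_ :: w, List.mem_cons_of_mem _ hyw, mul_pos hxz hw⟩

end Chain

section Avoid

variable {X : Type} [Fintype X] {P : X → X → ℝ} {dead : X}

/-- The probability that the chain started at `x` stays off `dead` at times `0, …, n`. -/
noncomputable def avoidProb (P : X → X → ℝ) (dead : X) : ℕ → X → ℝ
  | 0, x => if x = dead then 0 else 1
  | n + 1, x => if x = dead then 0 else ∑ y, P x y * avoidProb P dead n y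

@[simp]
lemma avoidProb_dead (n : ℕ) : avoidProb P dead n dead = 0 := by
  cases n <;> simp [avoidProb]

lemma avoidProb_succ_of_ne {x : X} (hx : x ≠ dead) (n : ℕ) :
    avoidProb P dead (n + 1) x = ∑ y, P x y * avoidProb P dead n y := by
  simp [avoidProb, hx]

lemma avoidProb_le_one (hP : P ∈ rowStochastic ℝ X) :
    ∀ (n : ℕ) (x : X), avoidProb P dead n x ≤ 1
  | 0, x => by unfold avoidProb; split_ifs <;> norm_num
  | n + 1, x => by
      unfold avoidProb
      split_ifs
      · exact zero_le_one
      · calc ∑ y, P x y * avoidProb P dead n y ≤ ∑ y, P x y :=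
              Finset.sum_le_sum fun y _ =>
                mul_le_of_le_one_right (nonneg_of_mem_rowStochastic hP) (avoidProb_le_one hP n y)
          _ = 1 := sum_row_of_mem_rowStochastic hP x

lemma avoidProb_add_chainFrom_le_one (hP : P ∈ rowStochastic ℝ X) :
    ∀ {x : X} {w : List X}, dead ∈ x :: w →
      avoidProb P dead w.length x + chainFrom P x w ≤ 1
  | x, [], hw => by
      obtain rfl : dead = x := List.mem_singleton.1 hw
      simp [chainFrom]
  | x, y :: w, hw => by
      by_cases hx : x = dead
      · subst hx
        simpa using chainFrom_le_one (fun _ _ => nonneg_of_mem_rowStochastic hP)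
          (fun _ _ => le_one_of_mem_rowStochastic hP) x (y :: w)
      have hyw : avoidProb P dead w.length y + chainFrom P y w ≤ 1 :=
        avoidProb_add_chainFrom_le_one hP ((List.mem_cons.1 hw).resolve_left (Ne.symm hx))
      have hle : ∀ z, P x z * avoidProb P dead w.length z ≤
          P x z - if z = y then P x y * chainFrom P y w else 0 := fun z => by
        have hxz := nonneg_of_mem_rowStochastic hP (i := x) (j := z)
        split_ifs with hz
        · subst hz; nlinarith
        · simpa using mul_le_mul_of_nonneg_left (avoidProb_le_one hP w.length z) hxz
      calc avoidProb P dead (y :: w).length x + chainFrom P x (y :: w)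
          = ∑ z, P x z * avoidProb P dead w.length z + P x y * chainFrom P y w := by
            rw [List.length_cons, avoidProb_succ_of_ne hx]; rfl
        _ ≤ ∑ z, (P x z - if z = y then P x y * chainFrom P y w else 0) +
              P x y * chainFrom P y w := by
            gcongr with z; exact hle z
        _ = ∑ z, P x z := by simp [Finset.sum_sub_distrib]
        _ = 1 := sum_row_of_mem_rowStochastic hP x

lemma avoidProb_add_le (hP : ∀ x y, 0 ≤ P x y) {k : ℕ} {r : ℝ}
    (hk : ∀ y, y ≠ dead → avoidProb P dead k y ≤ r) :
    ∀ (n : ℕ) (x : X), avoidProb P dead (n + k) x ≤ r * avoidProb P dead n x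
  | 0, x => by
      by_cases hx : x = dead
      · simp [hx]
      · simpa [avoidProb, hx] using hk x hx
  | n + 1, x => by
      by_cases hx : x = dead
      · simp [hx]
      rw [Nat.add_right_comm, avoidProb_succ_of_ne hx, avoidProb_succ_of_ne hx, Finset.mul_sum]
      exact Finset.sum_le_sum fun y _ => by
        nlinarith [mul_le_mul_of_nonneg_left (avoidProb_add_le hP hk n y) (hP x y)]

lemma avoidProb_mul_le_pow (hP : ∀ x y, 0 ≤ P x y) {k : ℕ} {r : ℝ} (hr : 0 ≤ r)
    (hk : ∀ y, y ≠ dead → avoidProb P dead k y ≤ r) (x : X) :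
    ∀ m : ℕ, avoidProb P dead (m * k) x ≤ r ^ m
  | 0 => by simp only [zero_mul, pow_zero, avoidProb]; split_ifs <;> norm_num
  | m + 1 => calc
      avoidProb P dead ((m + 1) * k) x ≤ r * avoidProb P dead (m * k) x := by
        rw [Nat.succ_mul]; exact avoidProb_add_le hP hk _ x
      _ ≤ r * r ^ m := mul_le_mul_of_nonneg_left (avoidProb_mul_le_pow hP hr hk x m) hr
      _ = r ^ (m + 1) := (pow_succ' r m).symm

lemma sum_pi_fin_succ_eq_sum_cons {M : Type} [AddCommMonoid M] {n : ℕ}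
    (F : (Fin (n + 1) → X) → M) :
    ∑ g, F g = ∑ y, ∑ g : Fin n → X, F (Fin.cons y g) := by
  rw [← (Fin.consEquiv fun _ => X).sum_comp, Fintype.sum_prod_type]
  rfl

lemma sum_chainFrom_avoid (x : X) :
    ∀ n : ℕ, ∑ g : Fin n → X,
        (if dead ∈ x :: List.ofFn g then 0 else chainFrom P x (List.ofFn g))
      = avoidProb P dead n x
  | 0 => by by_cases hx : x = dead <;> simp [avoidProb, chainFrom, hx, Ne.symm]
  | n + 1 => by
      by_cases hx : x = dead
      · simp [hx]
      rw [sum_pi_fin_succ_eq_sum_cons, avoidProb_succ_of_ne hx]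
      refine Finset.sum_congr rfl fun y _ => ?_
      rw [← sum_chainFrom_avoid y n, Finset.mul_sum]
      refine Finset.sum_congr rfl fun g _ => ?_
      simp [chainFrom, Ne.symm hx]

lemma sum_chainPrefixProb_avoid (start : X) (n : ℕ) :
    ∑ g : Fin (n + 1) → X,
        (if dead ∈ List.ofFn g then 0 else chainPrefixProb P start (List.ofFn g))
      = avoidProb P dead n start := by
  rw [sum_pi_fin_succ_eq_sum_cons, ← sum_chainFrom_avoid,
    Fintype.sum_eq_single start fun y hy => by simp [chainPrefixProb, hy]]
  simp [chainPrefixProb]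

end Avoid

lemma mem_cyl_ofFn {X : Type} (ω : ℕ → X) (n : ℕ) :
    ω ∈ Cyl (List.ofFn fun i : Fin n => ω i) := by
  intro i hi
  simp_all

namespace IsChainMeasure

variable {X : Type} {P : X → X → ℝ} {start dead : X} {μ : Measure (ℕ → X)}

lemma measure_exists_eq_eq_zero [Countable X] (hμ : IsChainMeasure P start μ)
    (hP : ∀ x y, 0 ≤ P x y) (hdead : ¬ ReflTransGen (fun a b => 0 < P a b) start dead) :
    μ {ω | ∃ n, ω n = dead} = 0 := by
  have hcyl : ∀ l : List X, dead ∈ l → μ (Cyl l) = 0 := by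
    rintro (_ | ⟨y, l⟩) hl
    · exact absurd hl List.not_mem_nil
    rw [hμ.2, ENNReal.ofReal_eq_zero, chainPrefixProb]
    split_ifs with hy
    · subst hy
      refine not_lt.1 fun hpos => hdead ?_
      rcases List.mem_cons.1 hl with rfl | hl
      exacts [ReflTransGen.refl, reflTransGen_of_chainFrom_pos hP hpos hl]
    · exact le_rfl
  refine measure_mono_null (fun ω ⟨n, hn⟩ => ?_)
    ((measure_biUnion_null_iff (Set.to_countable {l : List X | dead ∈ l})).2 hcyl)
  exact Set.mem_biUnion (x := List.ofFn fun i : Fin (n + 1) => ω i)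
    (List.mem_ofFn.2 ⟨Fin.last n, hn⟩) (mem_cyl_ofFn ω (n + 1))

variable [Fintype X]

lemma measure_forall_ne_le (hμ : IsChainMeasure P start μ) (hP : ∀ x y, 0 ≤ P x y) (n : ℕ) :
    μ {ω | ∀ i, ω i ≠ dead} ≤ ENNReal.ofReal (avoidProb P dead n start) := by
  let alive := Finset.univ.filter fun g : Fin (n + 1) → X => dead ∉ List.ofFn g
  calc μ {ω | ∀ i, ω i ≠ dead} ≤ μ (⋃ g ∈ alive, Cyl (List.ofFn g)) :=
        measure_mono fun ω hω => Set.mem_biUnion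
          (show (fun i : Fin (n + 1) => ω i) ∈ alive by
            simp only [alive, Finset.mem_filter, Finset.mem_univ, true_and, List.mem_ofFn,
              not_exists]
            exact fun i => hω i)
          (mem_cyl_ofFn ω (n + 1))
    _ ≤ ∑ g ∈ alive, μ (Cyl (List.ofFn g)) := measure_biUnion_finset_le _ _
    _ = ENNReal.ofReal (∑ g ∈ alive, chainPrefixProb P start (List.ofFn g)) := by
        rw [ENNReal.ofReal_sum_of_nonneg fun g _ => chainPrefixProb_nonneg hP start _]
        exact Finset.sum_congr rfl fun g _ => hμ.2 _
    _ = ENNReal.ofReal (avoidProb P dead n start) := by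
        rw [← sum_chainPrefixProb_avoid, Finset.sum_filter]
        simp only [ite_not]

lemma measure_exists_eq_eq_one (hμ : IsChainMeasure P start μ) (hP : P ∈ rowStochastic ℝ X)
    {k : ℕ} {ε : ℝ} (hε : 0 < ε)
    (hreach : ∀ y, y ≠ dead →
      ∃ w : List X, w.length = k ∧ dead ∈ w ∧ ε ≤ chainFrom P y w) :
    μ {ω | ∃ n, ω n = dead} = 1 := by
  have hP0 : ∀ x y, 0 ≤ P x y := fun _ _ => nonneg_of_mem_rowStochastic hP
  -- `min ε 1` keeps the decay rate `1 - min ε 1` in `[0, 1)` without assuming `ε ≤ 1`.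
  have hr0 : 0 ≤ 1 - min ε 1 := sub_nonneg.2 (min_le_right ε 1)
  have hr1 : 1 - min ε 1 < 1 := sub_lt_self 1 (lt_min hε one_pos)
  have hk : ∀ y, y ≠ dead → avoidProb P dead k y ≤ 1 - min ε 1 := fun y hy => by
    obtain ⟨w, rfl, hw, hεw⟩ := hreach y hy
    linarith [avoidProb_add_chainFrom_le_one hP (List.mem_cons_of_mem y hw), min_le_left ε 1]
  have htendsto : Tendsto (fun m => ENNReal.ofReal ((1 - min ε 1) ^ m)) atTop (nhds 0) := by
    simpa using ENNReal.tendsto_ofReal (tendsto_pow_atTop_nhds_zero_of_lt_one hr0 hr1)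
  have hsurvive : μ {ω | ∀ n, ω n ≠ dead} = 0 :=
    le_antisymm (ge_of_tendsto' htendsto fun m => (hμ.measure_forall_ne_le hP0 (m * k)).trans
      (ENNReal.ofReal_le_ofReal (avoidProb_mul_le_pow hP0 hr0 hk start m))) bot_le
  have := hμ.1
  rw [measure_congr (ae_eq_univ.2 (by simpa [Set.compl_ofPred] using hsurvive)), measure_univ]

lemma measure_exists_eq_eq_one_of_reset (hμ : IsChainMeasure P start μ)
    (hP : P ∈ rowStochastic ℝ X) {δ : ℝ} (hδ : 0 < δ)
    (hreset : ∀ y, y ≠ dead → δ ≤ P y start)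
    (hdead : TransGen (fun a b => 0 < P a b) start dead) :
    μ {ω | ∃ n, ω n = dead} = 1 := by
  obtain ⟨w, hw, hpos⟩ := exists_chainFrom_pos_of_transGen hdead
  refine hμ.measure_exists_eq_eq_one hP (mul_pos hδ hpos) fun y hy =>
    ⟨start :: w, rfl, List.mem_cons_of_mem start hw, ?_⟩
  exact mul_le_mul_of_nonneg_right (hreset y hy) hpos.le

end IsChainMeasure

section MonitoredProduct

variable [Fintype S] [Fintype A] [Fintype UR] [Fintype UH] [Fintype Z] {null : Z}
  (M : NRMDP S A) (lab : A → S → Z) (R : MRM UR Z null) (H : MRM UH Z null)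

noncomputable def uniformChain : Option (S × UR × UH) → Option (S × UR × UH) → ℝ :=
  fun x y => (∑ α : A ⊕ Unit, monT M.T lab R H M.s0 x α y) / (Fintype.card A + 1)

lemma monT_nonneg (x : Option (S × UR × UH)) (α : A ⊕ Unit) (y : Option (S × UR × UH)) :
    0 ≤ monT M.T lab R H M.s0 x α y := by
  have hT := M.T_nonneg
  rcases x with _ | x <;> rcases α with a | _ <;> rcases y with _ | y <;> simp only [monT] <;>
    first
    | positivity
    | exact Finset.sum_nonneg fun _ _ => by split_ifs <;> simp [hT]
    | (split_ifs <;> simp [hT])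

lemma sum_monT_eq_one (x : Option (S × UR × UH)) (α : A ⊕ Unit) :
    ∑ y, monT M.T lab R H M.s0 x α y = 1 := by
  rcases x with _ | x
  · simp [Fintype.sum_option, monT]
  rcases α with a | _
  · rw [Fintype.sum_option, ← M.T_sum_one x.1 a]
    simp only [monT, Fintype.sum_prod_type, ite_and, Finset.sum_ite_irrel, Finset.sum_ite_eq',
      Finset.mem_univ, if_true, Finset.sum_const_zero, ← Finset.sum_add_distrib]
    exact Finset.sum_congr rfl fun s' _ => by split_ifs <;> simp_all
  · simp [Fintype.sum_option, monT]

lemma uniformChain_mem_rowStochastic : uniformChain M lab R H ∈ rowStochastic ℝ _ := by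
  refine mem_rowStochastic_iff_sum.2 ⟨fun x y => ?_, fun x => ?_⟩
  · exact div_nonneg (Finset.sum_nonneg fun α _ => monT_nonneg M lab R H x α y) (by positivity)
  · simp only [uniformChain, ← Finset.sum_div]
    rw [Finset.sum_comm]
    simp only [sum_monT_eq_one, Finset.sum_const, Finset.card_univ, Fintype.card_sum,
      Fintype.card_unit, nsmul_eq_mul, mul_one, Nat.cast_add, Nat.cast_one]
    exact div_self (by positivity)

lemma uniformChain_pos_iff {x y : Option (S × UR × UH)} :
    0 < uniformChain M lab R H x y ↔ ∃ α, 0 < monT M.T lab R H M.s0 x α y := by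
  rw [uniformChain, div_pos_iff_of_pos_right (by positivity),
    Finset.sum_pos_iff_of_nonneg fun α _ => monT_nonneg M lab R H x α y]
  simp

lemma inv_card_le_uniformChain_reset {x : Option (S × UR × UH)} (hx : x ≠ none) :
    1 / (Fintype.card A + 1) ≤ uniformChain M lab R H x (some (M.s0, R.u0, H.u0)) := by
  obtain ⟨p, rfl⟩ := Option.ne_none_iff_exists'.1 hx
  refine div_le_div_of_nonneg_right ?_ (by positivity)
  calc (1 : ℝ) = monT M.T lab R H M.s0 (some p) (Sum.inr ()) (some (M.s0, R.u0, H.u0)) := by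
        simp [monT]
    _ ≤ _ := Finset.single_le_sum (fun β _ => monT_nonneg M lab R H _ β _) (Finset.mem_univ _)

def TracesAgreeFrom : Option (S × UR × UH) → Prop
  | none => False
  | some (s, uR, uH) => ∀ h, ValidFrom M.T s h →
      rewardTrace lab R.δu R.δr uR h = rewardTrace lab H.δu H.δr uH h

lemma tracesAgreeFrom_of_uniformChain_pos
    (hstart : TracesAgreeFrom M lab R H (some (M.s0, R.u0, H.u0)))
    {x y : Option (S × UR × UH)} (hx : TracesAgreeFrom M lab R H x)
    (hxy : 0 < uniformChain M lab R H x y) : TracesAgreeFrom M lab R H y := by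
  obtain ⟨α, hα⟩ := (uniformChain_pos_iff M lab R H).1 hxy
  rcases x with _ | ⟨s, uR, uH⟩
  · exact hx.elim
  rcases α with a | _ <;> rcases y with _ | ⟨s', vR, vH⟩
  · obtain ⟨s', -, hs'⟩ := (Finset.sum_pos_iff_of_nonneg fun t _ => by
      split_ifs <;> simp [M.T_nonneg]).1 hα
    split_ifs at hs' with hr
    · simpa [rewardTrace, hr] using hx [(a, s')] ⟨hs', trivial⟩
    · exact (lt_irrefl 0 hs').elim
  · simp only [monT] at hα
    split_ifs at hα with hc
    · obtain ⟨hr, rfl, rfl⟩ := hc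
      intro h hv
      simpa [rewardTrace, hr] using hx ((a, s') :: h) ⟨hα, hv⟩
    · exact (lt_irrefl 0 hα).elim
  · simp [monT] at hα
  · simp only [monT] at hα
    split_ifs at hα with hq
    · rwa [hq]
    · exact (lt_irrefl 0 hα).elim

lemma not_reflTransGen_none
    (hno : ¬ ∃ h : List (A × S), ValidFrom M.T M.s0 h ∧
      rewardTrace lab R.δu R.δr R.u0 h ≠ rewardTrace lab H.δu H.δr H.u0 h) :
    ¬ ReflTransGen (fun x y => 0 < uniformChain M lab R H x y) (some (M.s0, R.u0, H.u0)) none := by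
  have hstart : TracesAgreeFrom M lab R H (some (M.s0, R.u0, H.u0)) := fun h hv =>
    not_not.1 fun hne => hno ⟨h, hv, hne⟩
  have hagree : ∀ y, ReflTransGen (fun x y => 0 < uniformChain M lab R H x y)
      (some (M.s0, R.u0, H.u0)) y → TracesAgreeFrom M lab R H y := fun y hy => by
    induction hy with
    | refl => exact hstart
    | tail _ hxy ih => exact tracesAgreeFrom_of_uniformChain_pos M lab R H hstart ih hxy
  exact hagree none

lemma transGen_none_of_rewardTrace_ne :
    ∀ {h : List (A × S)} {s : S} {uR : UR} {uH : UH}, ValidFrom M.T s h →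
      rewardTrace lab R.δu R.δr uR h ≠ rewardTrace lab H.δu H.δr uH h →
      TransGen (fun x y => 0 < uniformChain M lab R H x y) (some (s, uR, uH)) none
  | [], _, _, _, _, hne => absurd rfl hne
  | (a, s') :: h, s, uR, uH, ⟨hT, hv⟩, hne => by
      by_cases hr : R.δr uR (lab a s') = H.δr uH (lab a s')
      · have hne' : rewardTrace lab R.δu R.δr (R.δu uR (lab a s')) h ≠
            rewardTrace lab H.δu H.δr (H.δu uH (lab a s')) h :=
          fun he => hne (by simp [rewardTrace, hr, he])
        refine TransGen.head ((uniformChain_pos_iff M lab R H).2 ⟨Sum.inl a, ?_⟩)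
          (transGen_none_of_rewardTrace_ne hv hne')
        simpa [monT, hr] using hT
      · refine TransGen.single ((uniformChain_pos_iff M lab R H).2 ⟨Sum.inl a, ?_⟩)
        exact Finset.sum_pos' (fun t _ => by split_ifs <;> simp [M.T_nonneg])
          ⟨s', Finset.mem_univ _, by simpa [hr] using hT⟩

end MonitoredProduct

/-- Under the Markov chain induced on the monitored homing
product `M ⊗↻_λ R,H` by the uniform strategy (each action of `A ∪ {↻}`
with probability `1/(|A|+1)`), started at the initial state, the probability
of eventually visiting `CE` is `1` if some history of `M` distinguishes the
reward traces of `R` and `H`, and `0` otherwise. -/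
theorem uniform_chain_hits_CE_iff
    [Fintype S] [Fintype A] [Fintype UR] [Fintype UH] [Fintype Z]
    (M : NRMDP S A) (null : Z) (lab : A → S → Z)
    (R : MRM UR Z null) (H : MRM UH Z null)
    (μ : MeasureTheory.Measure (ℕ → Option (S × UR × UH)))
    (hμ : IsChainMeasure
      (fun x y => (∑ α : A ⊕ Unit, monT M.T lab R H M.s0 x α y) / (Fintype.card A + 1))
      (some ((M.s0 : S), (R.u0 : UR), (H.u0 : UH))) μ) :
    ((∃ h : List (A × S), ValidFrom M.T M.s0 h ∧
        rewardTrace lab R.δu R.δr R.u0 h ≠ rewardTrace lab H.δu H.δr H.u0 h) →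
      μ {ω | ∃ n : ℕ, ω n = none} = 1) ∧
    ((¬ ∃ h : List (A × S), ValidFrom M.T M.s0 h ∧
        rewardTrace lab R.δu R.δr R.u0 h ≠ rewardTrace lab H.δu H.δr H.u0 h) →
      μ {ω | ∃ n : ℕ, ω n = none} = 0) := by
  have hP := uniformChain_mem_rowStochastic M lab R H
  have hμ' : IsChainMeasure (uniformChain M lab R H) (some (M.s0, R.u0, H.u0)) μ := hμ
  refine ⟨fun ⟨h, hv, hne⟩ => ?_, fun hno => ?_⟩
  · exact hμ'.measure_exists_eq_eq_one_of_reset hP (by positivity)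
      (fun y hy => inv_card_le_uniformChain_reset M lab R H hy)
      (transGen_none_of_rewardTrace_ne M lab R H hv hne)
  · exact hμ'.measure_exists_eq_eq_zero (fun _ _ => nonneg_of_mem_rowStochastic hP)
      (not_reflTransGen_none M lab R H hno)
end
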